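/- Let X be an integrable random variable with finite right endpoint x* = sup{x : F(x) < 1} and P(X = x*) = 0. Then for every τ ∈ (0,1) the τ-th expectile satisfies ξ_τ < x*, and ξ_τ → x* as τ → 1. -/

import Mathlib

/-!
Write `g t = E[(X - t)⁺]` and `c τ = (2τ - 1) / (1 - τ)`, so that the expectile equation
reads `ξ τ - E X = c τ * g (ξ τ)`. Since `X < x*` almost surely, `g` vanishes on `[x*, ∞)`
and `E X < x*`; so `ξ τ ≥ x*` would force `ξ τ = E X < x*`. For `y < x*` the endpoint
assumption gives `g y > 0`, and `c τ → ∞` as `τ → 1⁻`, so eventually `c τ * g y > y - E X`.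
As `g` is antitone, `ξ τ ≤ y` would give `ξ τ - E X ≥ c τ * g y > y - E X`; hence eventually
`y < ξ τ`.
-/

open MeasureTheory Filter Topology

lemma ite_lt_sub_eq_max (t x : ℝ) : (if t < x then x - t else 0) = max (x - t) 0 := by
  split_ifs with h
  · exact (max_eq_left (sub_nonneg.2 h.le)).symm
  · exact (max_eq_right (sub_nonpos.2 (not_lt.1 h))).symm

lemma tendsto_two_mul_sub_one_div_one_sub :
    Tendsto (fun τ : ℝ ↦ (2 * τ - 1) / (1 - τ)) (𝓝[<] 1) atTop := by
  have hnum : Tendsto (fun τ : ℝ ↦ 2 * τ - 1) (𝓝[<] 1) (𝓝 1) :=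
    (((continuous_const.mul continuous_id).sub continuous_const).tendsto' 1 1
      (by norm_num)).mono_left nhdsWithin_le_nhds
  have hden : Tendsto (fun τ : ℝ ↦ 1 - τ) (𝓝[<] 1) (𝓝[>] 0) := by
    refine tendsto_nhdsWithin_of_tendsto_nhds_of_eventually_within _ ?_ ?_
    · exact ((continuous_const.sub continuous_id).tendsto' 1 0 (sub_self 1)).mono_left
        nhdsWithin_le_nhds
    · filter_upwards [self_mem_nhdsWithin] with τ (hτ : τ < 1)
      exact sub_pos.2 hτ
  exact hnum.pos_mul_atTop one_pos (tendsto_inv_nhdsGT_zero.comp hden)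

section StopLoss

variable {Ω : Type*} [MeasurableSpace Ω] {μ : Measure Ω} {X : Ω → ℝ}

lemma integrable_max_sub_zero [IsFiniteMeasure μ] (hX : Integrable X μ) (t : ℝ) :
    Integrable (fun ω ↦ max (X ω - t) 0) μ :=
  (hX.sub (integrable_const t)).pos_part

lemma integral_max_sub_zero_pos [IsFiniteMeasure μ] (hX : Integrable X μ) {t : ℝ}
    (ht : μ {ω | t < X ω} ≠ 0) : 0 < ∫ ω, max (X ω - t) 0 ∂μ := by
  have hsupp : Function.support (fun ω ↦ max (X ω - t) 0) = {ω | t < X ω} := by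
    ext ω
    simp
  rw [integral_pos_iff_support_of_nonneg (f := fun ω ↦ max (X ω - t) 0)
    (fun ω ↦ le_max_right _ _) (integrable_max_sub_zero hX t), hsupp]
  exact pos_iff_ne_zero.2 ht

lemma integral_max_sub_zero_eq_zero {t : ℝ} (hXt : ∀ᵐ ω ∂μ, X ω ≤ t) :
    ∫ ω, max (X ω - t) 0 ∂μ = 0 := by
  refine integral_eq_zero_of_ae ?_
  filter_upwards [hXt] with ω hω
  exact max_eq_right (sub_nonpos.2 hω)

lemma integral_max_sub_zero_anti [IsFiniteMeasure μ] (hX : Integrable X μ) {s t : ℝ}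
    (hst : s ≤ t) : ∫ ω, max (X ω - t) 0 ∂μ ≤ ∫ ω, max (X ω - s) 0 ∂μ :=
  integral_mono (integrable_max_sub_zero hX t) (integrable_max_sub_zero hX s)
    fun ω ↦ max_le_max (by linarith) le_rfl

lemma integral_lt_of_ae_lt [IsProbabilityMeasure μ] (hX : Integrable X μ) {c : ℝ}
    (hXc : ∀ᵐ ω ∂μ, X ω < c) : ∫ ω, X ω ∂μ < c := by
  have hpos : 0 < ∫ ω, (c - X ω) ∂μ := by
    rw [integral_pos_iff_support_of_nonneg_ae (hXc.mono fun ω h ↦ sub_nonneg.2 h.le)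
      ((integrable_const c).sub hX), pos_iff_ne_zero]
    intro hnull
    obtain ⟨ω, hω, hsupp⟩ := (hXc.and (measure_eq_zero_iff_ae_notMem.1 hnull)).exists
    exact hsupp (sub_ne_zero.2 hω.ne')
  rw [integral_sub (integrable_const c) hX, integral_const, probReal_univ, one_smul] at hpos
  linarith

lemma lt_of_sub_eq_mul_integral_max_sub_zero_of_ae_lt {m c ξ b : ℝ} (hmb : m < b)
    (hXb : ∀ᵐ ω ∂μ, X ω < b) (hξ : ξ - m = c * ∫ ω, max (X ω - ξ) 0 ∂μ) : ξ < b := by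
  by_contra! hbξ
  rw [integral_max_sub_zero_eq_zero (hXb.mono fun ω h ↦ (h.trans_le hbξ).le), mul_zero]
    at hξ
  linarith

lemma lt_of_sub_eq_mul_integral_max_sub_zero [IsFiniteMeasure μ] (hX : Integrable X μ)
    {m c ξ y : ℝ} (hc : 0 ≤ c) (hy : y - m < c * ∫ ω, max (X ω - y) 0 ∂μ)
    (hξ : ξ - m = c * ∫ ω, max (X ω - ξ) 0 ∂μ) : y < ξ := by
  by_contra! hξy
  have := mul_le_mul_of_nonneg_left (integral_max_sub_zero_anti hX hξy) hc
  linarith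

end StopLoss

theorem expectile_lt_endpoint_and_tendsto_general {Ω : Type*} [MeasurableSpace Ω] (μ : Measure Ω)
    [IsProbabilityMeasure μ] (X : Ω → ℝ) (hX : Integrable X μ)
    (xstar : ℝ)
    (hub : ∀ᵐ ω ∂μ, X ω ≤ xstar)
    (hend : ∀ y : ℝ, y < xstar → μ {ω | y < X ω} ≠ 0)
    (hatom : μ {ω | X ω = xstar} = 0)
    (ξ : ℝ → ℝ)
    (hξ : ∀ τ ∈ Set.Ioo (0 : ℝ) 1, ξ τ - ∫ ω, X ω ∂μ
        = ((2 * τ - 1) / (1 - τ)) * ∫ ω, (if ξ τ < X ω then X ω - ξ τ else 0) ∂μ) :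
    (∀ τ ∈ Set.Ioo (0 : ℝ) 1, ξ τ < xstar) ∧
      Tendsto ξ (nhdsWithin (1 : ℝ) (Set.Iio 1)) (nhds xstar) := by
  simp_rw [ite_lt_sub_eq_max] at hξ
  have hlt : ∀ᵐ ω ∂μ, X ω < xstar := by
    filter_upwards [hub, measure_eq_zero_iff_ae_notMem.1 hatom] with ω hle hne
    exact hle.lt_of_ne hne
  have hmean := integral_lt_of_ae_lt hX hlt
  have hbelow : ∀ τ ∈ Set.Ioo (0 : ℝ) 1, ξ τ < xstar := fun τ hτ ↦
    lt_of_sub_eq_mul_integral_max_sub_zero_of_ae_lt hmean hlt (hξ τ hτ)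
  have hIoo : ∀ᶠ τ in 𝓝[<] (1 : ℝ), τ ∈ Set.Ioo (0 : ℝ) 1 := Ioo_mem_nhdsLT one_pos
  refine ⟨hbelow, tendsto_order.2 ⟨fun a ha ↦ ?_, fun b hb ↦ ?_⟩⟩
  · set y := max a ((∫ ω, X ω ∂μ + xstar) / 2)
    have hy : y < xstar := max_lt ha (by linarith)
    have hcoeff := tendsto_two_mul_sub_one_div_one_sub.atTop_mul_const
      (integral_max_sub_zero_pos hX (hend y hy))
    filter_upwards [hcoeff.eventually_gt_atTop (y - ∫ ω, X ω ∂μ),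
      tendsto_two_mul_sub_one_div_one_sub.eventually_ge_atTop 0, hIoo] with τ hτy hτc hτ
    exact (le_max_left _ _).trans_lt
      (lt_of_sub_eq_mul_integral_max_sub_zero hX hτc hτy (hξ τ hτ))
  · filter_upwards [hIoo] with τ hτ
    exact (hbelow τ hτ).trans hb

/-- If `X` is an integrable nondegenerate random variable with finite right
endpoint `x*` and `P(X = x*) = 0`, then the τ-th expectile `ξ_τ` satisfies `ξ_τ < x*` for
every `τ ∈ (0,1)`, and `ξ_τ → x*` as `τ → 1`. -/
theorem expectile_lt_endpoint_and_tendsto {Ω : Type*} [MeasurableSpace Ω] (μ : Measure Ω)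
    [IsProbabilityMeasure μ] (X : Ω → ℝ) (hXmeas : Measurable X) (hX : Integrable X μ)
    (hnd : ¬ ∃ c : ℝ, ∀ᵐ ω ∂μ, X ω = c)
    (xstar : ℝ)
    (hub : ∀ᵐ ω ∂μ, X ω ≤ xstar)
    (hend : ∀ y : ℝ, y < xstar → μ {ω | y < X ω} ≠ 0)
    (hatom : μ {ω | X ω = xstar} = 0)
    (ξ : ℝ → ℝ)
    (hξ : ∀ τ ∈ Set.Ioo (0 : ℝ) 1, ξ τ - ∫ ω, X ω ∂μ
        = ((2 * τ - 1) / (1 - τ)) * ∫ ω, (if ξ τ < X ω then X ω - ξ τ else 0) ∂μ) :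
    (∀ τ ∈ Set.Ioo (0 : ℝ) 1, ξ τ < xstar) ∧
      Tendsto ξ (nhdsWithin (1 : ℝ) (Set.Iio 1)) (nhds xstar) :=
  expectile_lt_endpoint_and_tendsto_general μ X hX xstar hub hend hatom ξ hξ
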